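/- arXiv:1905.09623 — 4 statements merged into one kernel-verified Lean document; each statement's English description precedes it below -/
import Mathlib

section
/- Let β₁, β₂, β₃, β₄ ∈ ℚ be such that 2β_i ∈ ℤ for each i, β₁+β₂ ∈ ℤ, β₃+β₄ ∈ ℤ, β₃+β₄ ≠ 0, and such that the number 2S := (1/(2(β₃+β₄)))·[(β₁+β₂+β₃+β₄)² − 2(β₁²+β₂²+β₃²+β₄²) + 2(β₃−β₄)] is an integer. Then (S, T, U, V) = (S, S, 1/2, −1/2) is a solution of the system (S+T+U+V)² − 2S² − 2T² − 2U² − 2V² = −1 and 2α(S+T+U+V) − 4β₁S − 4β₂T − 4β₃U − 4β₄V − d/4 = 0, where α = β₁+β₂+β₃+β₄ and d = 4α² − 8(β₁²+β₂²+β₃²+β₄²); moreover the numbers β₁′ = β₁+S, β₂′ = β₂+S, β₃′ = β₃+1/2, β₄′ = β₄−1/2 satisfy 2β_i′ ∈ ℤ for each i, β₁′+β₂′ ∈ ℤ, and β₃′+β₄′ ∈ ℤ. -/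
theorem exists_intCast_add {R : Type*} [AddGroupWithOne R] {x y : R}
    (hx : ∃ m : ℤ, x = m) (hy : ∃ m : ℤ, y = m) : ∃ m : ℤ, x + y = m := by
  obtain ⟨a, rfl⟩ := hx
  obtain ⟨b, rfl⟩ := hy
  exact ⟨a + b, (Int.cast_add a b).symm⟩

/-- Let `β₁, β₂, β₃, β₄ ∈ ℚ` with `2βᵢ ∈ ℤ`, `β₁+β₂ ∈ ℤ`, `β₃+β₄ ∈ ℤ`, `β₃+β₄ ≠ 0`,
and suppose the number
`2S = (1/(2(β₃+β₄)))·[(β₁+β₂+β₃+β₄)² − 2(β₁²+β₂²+β₃²+β₄²) + 2(β₃−β₄)]`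
is an integer.  Then `(S, T, U, V) = (S, S, 1/2, −1/2)` solves the system
`(S+T+U+V)² − 2S² − 2T² − 2U² − 2V² = −1` and
`2α(S+T+U+V) − 4β₁S − 4β₂T − 4β₃U − 4β₄V − d/4 = 0`
(where `α = β₁+β₂+β₃+β₄` and `d = 4α² − 8(β₁²+β₂²+β₃²+β₄²)`); moreover
`β₁′ = β₁+S`, `β₂′ = β₂+S`, `β₃′ = β₃+1/2`, `β₄′ = β₄−1/2` satisfy `2βᵢ′ ∈ ℤ`,
`β₁′+β₂′ ∈ ℤ` and `β₃′+β₄′ ∈ ℤ`. -/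
theorem sufficient_condition_solution
    (β₁ β₂ β₃ β₄ S : ℚ)
    (h1 : ∃ m : ℤ, 2 * β₁ = m) (h2 : ∃ m : ℤ, 2 * β₂ = m)
    (h3 : ∃ m : ℤ, 2 * β₃ = m) (h4 : ∃ m : ℤ, 2 * β₄ = m)
    (h12 : ∃ m : ℤ, β₁ + β₂ = m) (h34 : ∃ m : ℤ, β₃ + β₄ = m)
    (hne : β₃ + β₄ ≠ 0)
    (hSdef : 2 * S = (1 / (2 * (β₃ + β₄))) *
      ((β₁ + β₂ + β₃ + β₄) ^ 2 - 2 * (β₁ ^ 2 + β₂ ^ 2 + β₃ ^ 2 + β₄ ^ 2)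
        + 2 * (β₃ - β₄)))
    (hSint : ∃ m : ℤ, 2 * S = m) :
    ((S + S + 1/2 + (-1/2 : ℚ)) ^ 2
        - 2 * S ^ 2 - 2 * S ^ 2 - 2 * (1/2 : ℚ) ^ 2 - 2 * (-1/2 : ℚ) ^ 2 = -1 ∧
      2 * (β₁ + β₂ + β₃ + β₄) * (S + S + 1/2 + (-1/2 : ℚ))
          - 4 * β₁ * S - 4 * β₂ * S - 4 * β₃ * (1/2) - 4 * β₄ * (-1/2 : ℚ)
          - (4 * (β₁ + β₂ + β₃ + β₄) ^ 2
              - 8 * (β₁ ^ 2 + β₂ ^ 2 + β₃ ^ 2 + β₄ ^ 2)) / 4 = 0) ∧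
    ((∃ m : ℤ, 2 * (β₁ + S) = m) ∧ (∃ m : ℤ, 2 * (β₂ + S) = m) ∧
      (∃ m : ℤ, 2 * (β₃ + 1/2) = m) ∧ (∃ m : ℤ, 2 * (β₄ - 1/2) = m) ∧
      (∃ m : ℤ, (β₁ + S) + (β₂ + S) = m) ∧
      (∃ m : ℤ, (β₃ + 1/2) + (β₄ - 1/2) = m)) := by
  -- Clearing the denominator in `hSdef` makes the second equation an identity in `S`.
  have hS : 4 * (β₃ + β₄) * S = (β₁ + β₂ + β₃ + β₄) ^ 2
      - 2 * (β₁ ^ 2 + β₂ ^ 2 + β₃ ^ 2 + β₄ ^ 2) + 2 * (β₃ - β₄) := by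
    rw [show 4 * (β₃ + β₄) * S = 2 * (β₃ + β₄) * (2 * S) by ring, hSdef]
    field_simp
  have hone : ∃ m : ℤ, (1 : ℚ) = m := ⟨1, Int.cast_one.symm⟩
  have hneg_one : ∃ m : ℤ, (-1 : ℚ) = m := ⟨-1, by push_cast; rfl⟩
  refine ⟨⟨by ring, by linear_combination hS⟩, ?_, ?_, ?_, ?_, ?_, ?_⟩
  · simpa only [mul_add] using exists_intCast_add h1 hSint
  · simpa only [mul_add] using exists_intCast_add h2 hSint
  · rw [show 2 * (β₃ + 1/2) = 2 * β₃ + 1 by ring]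
    exact exists_intCast_add h3 hone
  · rw [show 2 * (β₄ - 1/2) = 2 * β₄ + -1 by ring]
    exact exists_intCast_add h4 hneg_one
  · rw [show (β₁ + S) + (β₂ + S) = (β₁ + β₂) + 2 * S by ring]
    exact exists_intCast_add h12 hSint
  · rwa [show (β₃ + 1/2) + (β₄ - 1/2) = β₃ + β₄ by ring]
end

section
/- Let β₁, β₂, β₃, β₄ ∈ ℚ be such that 2β_i ∈ ℤ for each i, β₁+β₂ ∈ ℤ, β₃+β₄ ∈ ℤ, β₃+β₄ ≠ 0, and such that 2S := (1/(2(β₃+β₄)))·[(β₁+β₂+β₃+β₄)² − 2(β₁²+β₂²+β₃²+β₄²) + 2(β₃−β₄)] is an integer. Set α = β₁+β₂+β₃+β₄, H = (α, β₁, β₂, β₃, β₄), and M = (α + 2S, β₁+S, β₂+S, β₃+1/2, β₄−1/2). Then q(M−H) = q(M−2H) = −4, and the first coordinate of M equals the sum of its last four coordinates (so M is invariant under the involution θ*). -/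
noncomputable section

namespace KummerSublattice

/-- The quadratic form `q(α, β₁, β₂, β₃, β₄) = 4α² − 8(β₁² + β₂² + β₃² + β₄²)` on `ℚ⁵`:
the self-intersection form of the class `αL − β₁F₁ − β₂F₂ − β₃F₃ − β₄F₄`
(with `L² = 4`, `F_k² = −8`, all pairwise orthogonal). -/
def q (v : Fin 5 → ℚ) : ℚ :=
  4 * (v 0) ^ 2 - 8 * ((v 1) ^ 2 + (v 2) ^ 2 + (v 3) ^ 2 + (v 4) ^ 2)

/- `M - H = (2S, S, S, 1/2, -1/2)`, whose `S`-terms cancel in `q`. -/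
theorem q_sub_eq_neg_four (α β₁ β₂ β₃ β₄ S : ℚ) :
    q (![α + 2 * S, β₁ + S, β₂ + S, β₃ + 1/2, β₄ - 1/2] - ![α, β₁, β₂, β₃, β₄]) = -4 := by
  simp only [q, Pi.sub_apply, Matrix.cons_val]
  ring

theorem q_sub_two_smul_eq_neg_four_iff (α β₁ β₂ β₃ β₄ S : ℚ) :
    q (![α + 2 * S, β₁ + S, β₂ + S, β₃ + 1/2, β₄ - 1/2] - (2 : ℚ) • ![α, β₁, β₂, β₃, β₄]) = -4 ↔
      4 * S * (α - β₁ - β₂) =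
        α ^ 2 - 2 * (β₁ ^ 2 + β₂ ^ 2 + β₃ ^ 2 + β₄ ^ 2) + 2 * (β₃ - β₄) := by
  simp only [q, Pi.sub_apply, Pi.smul_apply, smul_eq_mul, Matrix.cons_val]
  constructor <;> intro h
  · linear_combination (-1/4 : ℚ) * h
  · linear_combination (-4 : ℚ) * h

theorem solution_gives_theta_invariant_class_general
    (β₁ β₂ β₃ β₄ S : ℚ)
    (hne : β₃ + β₄ ≠ 0)
    (hSdef : 2 * S = (1 / (2 * (β₃ + β₄))) *
      ((β₁ + β₂ + β₃ + β₄) ^ 2 - 2 * (β₁ ^ 2 + β₂ ^ 2 + β₃ ^ 2 + β₄ ^ 2)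
        + 2 * (β₃ - β₄)))
    (α : ℚ) (hα : α = β₁ + β₂ + β₃ + β₄)
    (H M : Fin 5 → ℚ)
    (hH : H = ![α, β₁, β₂, β₃, β₄])
    (hM : M = ![α + 2 * S, β₁ + S, β₂ + S, β₃ + 1/2, β₄ - 1/2]) :
    q (M - H) = -4 ∧ q (M - (2 : ℚ) • H) = -4 ∧
      M 0 = M 1 + M 2 + M 3 + M 4 := by
  subst hα hH hM
  have hS : 4 * S * (β₃ + β₄) =
      (β₁ + β₂ + β₃ + β₄) ^ 2 - 2 * (β₁ ^ 2 + β₂ ^ 2 + β₃ ^ 2 + β₄ ^ 2) + 2 * (β₃ - β₄) := by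
    field_simp at hSdef
    linarith
  refine ⟨q_sub_eq_neg_four .., (q_sub_two_smul_eq_neg_four_iff ..).2 ?_, ?_⟩
  · rw [← hS]
    ring
  · simp only [Matrix.cons_val]
    ring

/-- Under the hypotheses of Proposition 3.3 (`2βᵢ ∈ ℤ`, `β₁+β₂ ∈ ℤ`, `β₃+β₄ ∈ ℤ`,
`β₃+β₄ ≠ 0` and `2S` an integer, where
`2S = (1/(2(β₃+β₄)))·[(β₁+β₂+β₃+β₄)² − 2(β₁²+β₂²+β₃²+β₄²) + 2(β₃−β₄)]`),
set `α = β₁+β₂+β₃+β₄`, `H = (α, β₁, β₂, β₃, β₄)` and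
`M = (α+2S, β₁+S, β₂+S, β₃+1/2, β₄−1/2)`.  Then `q(M−H) = q(M−2H) = −4`, and the
first coordinate of `M` equals the sum of its last four coordinates
(so `M` is `θ*`-invariant). -/
theorem solution_gives_theta_invariant_class
    (β₁ β₂ β₃ β₄ S : ℚ)
    (h1 : ∃ m : ℤ, 2 * β₁ = m) (h2 : ∃ m : ℤ, 2 * β₂ = m)
    (h3 : ∃ m : ℤ, 2 * β₃ = m) (h4 : ∃ m : ℤ, 2 * β₄ = m)
    (h12 : ∃ m : ℤ, β₁ + β₂ = m) (h34 : ∃ m : ℤ, β₃ + β₄ = m)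
    (hne : β₃ + β₄ ≠ 0)
    (hSdef : 2 * S = (1 / (2 * (β₃ + β₄))) *
      ((β₁ + β₂ + β₃ + β₄) ^ 2 - 2 * (β₁ ^ 2 + β₂ ^ 2 + β₃ ^ 2 + β₄ ^ 2)
        + 2 * (β₃ - β₄)))
    (hSint : ∃ m : ℤ, 2 * S = m)
    (α : ℚ) (hα : α = β₁ + β₂ + β₃ + β₄)
    (H M : Fin 5 → ℚ)
    (hH : H = ![α, β₁, β₂, β₃, β₄])
    (hM : M = ![α + 2 * S, β₁ + S, β₂ + S, β₃ + 1/2, β₄ - 1/2]) :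
    q (M - H) = -4 ∧ q (M - (2 : ℚ) • H) = -4 ∧
      M 0 = M 1 + M 2 + M 3 + M 4 :=
  solution_gives_theta_invariant_class_general β₁ β₂ β₃ β₄ S hne hSdef α hα H M hH hM

end KummerSublattice
end
end

section
/- Let k ≥ 1 be an integer. For H = (k+1, k/2, k/2, 1/2, 1/2), i.e. the class (k+1)L − (k/2)(F₁+F₂) − (1/2)(F₃+F₄), one has q(H) = 8k; and the coefficients β₁ = β₂ = k/2, β₃ = β₄ = 1/2 satisfy 2β_i ∈ ℤ, β₁+β₂ ∈ ℤ, β₃+β₄ ∈ ℤ, and (1/(2(β₃+β₄)))·[(β₁+β₂+β₃+β₄)² − 2(β₁²+β₂²+β₃²+β₄²) + 2(β₃−β₄)] = k ∈ ℤ. Moreover M = (2k+1, k, k, 1, 0), i.e. the class (2k+1)L − k(F₁+F₂) − F₃, satisfies q(M−H) = q(M−2H) = −4, and both H and M have first coordinate equal to the sum of their last four coordinates (θ*-invariance). -/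
/-!
Expanding `q` along the line `t ↦ M − t • H` gives
`q (M − t • H) = q M − 2t⟨M, H⟩ + t² q H = (16k − 4) − 24k t + 8k t² = 8k (t − 1)(t − 2) − 4`,
so both `M − H` and `M − 2H` are classes of square `−4`. The remaining claims are direct
evaluations of the coordinates of `H` and `M`.
-/

noncomputable section

namespace KummerSublattice

def pairing (v w : Fin 5 → ℚ) : ℚ :=
  4 * v 0 * w 0 - 8 * (v 1 * w 1 + v 2 * w 2 + v 3 * w 3 + v 4 * w 4)

theorem q_sub_smul (v w : Fin 5 → ℚ) (t : ℚ) :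
    q (v - t • w) = q v - 2 * t * pairing v w + t ^ 2 * q w := by
  simp only [q, pairing, Pi.sub_apply, Pi.smul_apply, smul_eq_mul]
  ring

theorem key_example_degree_8k_general
    (k : ℤ)
    (H M : Fin 5 → ℚ)
    (hH : H = ![(k : ℚ) + 1, (k : ℚ) / 2, (k : ℚ) / 2, 1/2, 1/2])
    (hM : M = ![2 * (k : ℚ) + 1, (k : ℚ), (k : ℚ), 1, 0]) :
    q H = 8 * (k : ℚ) ∧
    (∃ m : ℤ, 2 * ((k : ℚ) / 2) = m) ∧ (∃ m : ℤ, 2 * (1/2 : ℚ) = m) ∧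
    (∃ m : ℤ, (k : ℚ) / 2 + (k : ℚ) / 2 = m) ∧ (∃ m : ℤ, (1/2 : ℚ) + 1/2 = m) ∧
    (1 / (2 * ((1/2 : ℚ) + 1/2))) *
        (((k : ℚ) / 2 + (k : ℚ) / 2 + 1/2 + 1/2) ^ 2
          - 2 * (((k : ℚ) / 2) ^ 2 + ((k : ℚ) / 2) ^ 2 + (1/2 : ℚ) ^ 2 + (1/2 : ℚ) ^ 2)
          + 2 * ((1/2 : ℚ) - 1/2)) = (k : ℚ) ∧
    q (M - H) = -4 ∧ q (M - (2 : ℚ) • H) = -4 ∧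
    H 0 = H 1 + H 2 + H 3 + H 4 ∧ M 0 = M 1 + M 2 + M 3 + M 4 := by
  have hqH : q H = 8 * k := by simp [q, hH]; ring
  have hqM : q M = 16 * k - 4 := by simp [hM, q]; ring
  have hMH : pairing M H = 12 * k := by simp [hM, hH, pairing]; ring
  have hline (t : ℚ) : q (M - t • H) = 8 * k * (t - 1) * (t - 2) - 4 := by
    rw [q_sub_smul, hqM, hMH, hqH]; ring
  refine ⟨hqH, ⟨k, by ring⟩, ⟨1, by norm_num⟩, ⟨k, by ring⟩, ⟨1, by norm_num⟩, by ring,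
    by simpa using hline 1, by simpa using hline 2, by simp [hH]; ring, by simp [hM]; ring⟩

/-- Let `k ≥ 1` be an integer.  For `H = (k+1, k/2, k/2, 1/2, 1/2)`, i.e. the class
`(k+1)L − (k/2)(F₁+F₂) − (1/2)(F₃+F₄)`, one has `q(H) = 8k`; the coefficients
`β₁ = β₂ = k/2`, `β₃ = β₄ = 1/2` satisfy `2βᵢ ∈ ℤ`, `β₁+β₂ ∈ ℤ`, `β₃+β₄ ∈ ℤ`, and
`(1/(2(β₃+β₄)))·[(β₁+β₂+β₃+β₄)² − 2(β₁²+β₂²+β₃²+β₄²) + 2(β₃−β₄)] = k ∈ ℤ`.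
Moreover `M = (2k+1, k, k, 1, 0)`, i.e. the class `(2k+1)L − k(F₁+F₂) − F₃`,
satisfies `q(M−H) = q(M−2H) = −4`, and both `H` and `M` have first coordinate equal
to the sum of their last four coordinates (`θ*`-invariance). -/
theorem key_example_degree_8k
    (k : ℤ) (hk : 1 ≤ k)
    (H M : Fin 5 → ℚ)
    (hH : H = ![(k : ℚ) + 1, (k : ℚ) / 2, (k : ℚ) / 2, 1/2, 1/2])
    (hM : M = ![2 * (k : ℚ) + 1, (k : ℚ), (k : ℚ), 1, 0]) :
    q H = 8 * (k : ℚ) ∧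
    (∃ m : ℤ, 2 * ((k : ℚ) / 2) = m) ∧ (∃ m : ℤ, 2 * (1/2 : ℚ) = m) ∧
    (∃ m : ℤ, (k : ℚ) / 2 + (k : ℚ) / 2 = m) ∧ (∃ m : ℤ, (1/2 : ℚ) + 1/2 = m) ∧
    (1 / (2 * ((1/2 : ℚ) + 1/2))) *
        (((k : ℚ) / 2 + (k : ℚ) / 2 + 1/2 + 1/2) ^ 2
          - 2 * (((k : ℚ) / 2) ^ 2 + ((k : ℚ) / 2) ^ 2 + (1/2 : ℚ) ^ 2 + (1/2 : ℚ) ^ 2)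
          + 2 * ((1/2 : ℚ) - 1/2)) = (k : ℚ) ∧
    q (M - H) = -4 ∧ q (M - (2 : ℚ) • H) = -4 ∧
    H 0 = H 1 + H 2 + H 3 + H 4 ∧ M 0 = M 1 + M 2 + M 3 + M 4 :=
  key_example_degree_8k_general k H M hH hM

end KummerSublattice
end
end

section
/- Let β₁, β₂, β₃, β₄, β₁′, β₂′, β₃′, β₄′ ∈ ℚ satisfy: 2β_i ∈ ℤ and 2β_i′ ∈ ℤ for all i, β₁+β₂ ∈ ℤ, β₃+β₄ ∈ ℤ, β₁′+β₂′ ∈ ℤ, β₃′+β₄′ ∈ ℤ. Set α = β₁+β₂+β₃+β₄, α′ = β₁′+β₂′+β₃′+β₄′, H = (α, β₁, β₂, β₃, β₄), M = (α′, β₁′, β₂′, β₃′, β₄′). If q(M−H) = q(M−2H) = −4, then q(H) is divisible by 8 (equivalently, q(H)/4 is an even integer). In particular, when q(H)/4 is not an even integer, the associated system of Diophantine equations has no solution satisfying these half-integrality constraints. -/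
noncomputable section

namespace KummerSublattice

/-! With `D = M − H` the two equations say `q(D − H) = q(D)`, i.e. `q(H) = 2·polar(D, H)`.
Both `H` and `D` lie in the lattice `Λ` cut out by the half-integrality constraints, and `polar`
is `4ℤ`-valued on `Λ`: the coordinate `α` is integral, and for `u, v ∈ Λ` the sum
`2(u₁v₁ + u₂v₂)` is integral because `2u₁ ≡ 2u₂` and `2v₁ ≡ 2v₂ (mod 2)`; likewise for the
indices `3, 4`. -/

def polar (u v : Fin 5 → ℚ) : ℚ :=
  4 * u 0 * v 0 - 8 * (u 1 * v 1 + u 2 * v 2 + u 3 * v 3 + u 4 * v 4)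

theorem q_sub (u v : Fin 5 → ℚ) : q (u - v) = q u - 2 * polar u v + q v := by
  simp only [q, polar, Pi.sub_apply]
  ring

theorem q_eq_two_mul_polar_of_q_sub_eq {u v : Fin 5 → ℚ} (h : q (u - v) = q u) :
    q v = 2 * polar u v := by
  rw [q_sub] at h
  linarith

/-- The lattice `Λ`; `(⊥ : Subring ℚ)` is `ℤ`. -/
def Admissible (v : Fin 5 → ℚ) : Prop :=
  v 0 = v 1 + v 2 + v 3 + v 4 ∧ 2 * v 1 ∈ (⊥ : Subring ℚ) ∧ 2 * v 3 ∈ (⊥ : Subring ℚ) ∧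
    v 1 + v 2 ∈ (⊥ : Subring ℚ) ∧ v 3 + v 4 ∈ (⊥ : Subring ℚ)

theorem mem_bot_of_exists_eq_intCast {x : ℚ} (h : ∃ m : ℤ, x = m) : x ∈ (⊥ : Subring ℚ) :=
  let ⟨m, hm⟩ := h
  Subring.mem_bot.mpr ⟨m, hm.symm⟩

theorem admissible_vecCons {b₁ b₂ b₃ b₄ : ℚ} (h₁ : ∃ m : ℤ, 2 * b₁ = m)
    (h₃ : ∃ m : ℤ, 2 * b₃ = m) (h₁₂ : ∃ m : ℤ, b₁ + b₂ = m) (h₃₄ : ∃ m : ℤ, b₃ + b₄ = m) :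
    Admissible ![b₁ + b₂ + b₃ + b₄, b₁, b₂, b₃, b₄] :=
  ⟨rfl, mem_bot_of_exists_eq_intCast h₁, mem_bot_of_exists_eq_intCast h₃,
    mem_bot_of_exists_eq_intCast h₁₂, mem_bot_of_exists_eq_intCast h₃₄⟩

theorem Admissible.sub {u v : Fin 5 → ℚ} (hu : Admissible u) (hv : Admissible v) :
    Admissible (u - v) := by
  obtain ⟨hu₀, hu₁, hu₃, hu₁₂, hu₃₄⟩ := hu
  obtain ⟨hv₀, hv₁, hv₃, hv₁₂, hv₃₄⟩ := hv
  simp only [Admissible, Pi.sub_apply, mul_sub]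
  refine ⟨by rw [hu₀, hv₀]; ring, sub_mem hu₁ hv₁, sub_mem hu₃ hv₃, ?_, ?_⟩
  · simpa only [sub_add_sub_comm] using sub_mem hu₁₂ hv₁₂
  · simpa only [sub_add_sub_comm] using sub_mem hu₃₄ hv₃₄

theorem Admissible.apply_zero_mem {v : Fin 5 → ℚ} (hv : Admissible v) :
    v 0 ∈ (⊥ : Subring ℚ) := by
  obtain ⟨hv₀, -, -, hv₁₂, hv₃₄⟩ := hv
  rw [hv₀, add_assoc (v 1 + v 2)]
  exact add_mem hv₁₂ hv₃₄

theorem two_mul_add_mul_mem {R : Type*} [CommRing R] {S : Subring R} {a b c d : R}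
    (ha : 2 * a ∈ S) (hc : 2 * c ∈ S) (hab : a + b ∈ S) (hcd : c + d ∈ S) :
    2 * (a * c + b * d) ∈ S := by
  have key : 2 * (a * c + b * d) =
      2 * a * (2 * c) + (a + b) * (c + d) * 2 - (a + b) * (2 * c) - 2 * a * (c + d) := by ring
  rw [key]
  exact sub_mem (sub_mem (add_mem (mul_mem ha hc) (mul_mem (mul_mem hab hcd) (ofNat_mem S 2)))
    (mul_mem hab hc)) (mul_mem ha hcd)

theorem Admissible.exists_polar_eq_four_mul {u v : Fin 5 → ℚ} (hu : Admissible u)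
    (hv : Admissible v) : ∃ m : ℤ, polar u v = 4 * m := by
  have hα := mul_mem hu.apply_zero_mem hv.apply_zero_mem
  obtain ⟨-, hu₁, hu₃, hu₁₂, hu₃₄⟩ := hu
  obtain ⟨-, hv₁, hv₃, hv₁₂, hv₃₄⟩ := hv
  have hpair₁₂ := two_mul_add_mul_mem hu₁ hv₁ hu₁₂ hv₁₂
  have hpair₃₄ := two_mul_add_mul_mem hu₃ hv₃ hu₃₄ hv₃₄
  obtain ⟨m, hm⟩ := Subring.mem_bot.mp (sub_mem (sub_mem hα hpair₁₂) hpair₃₄)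
  refine ⟨m, ?_⟩
  rw [hm, polar]
  ring

theorem parity_obstruction_general
    (β₁ β₂ β₃ β₄ β₁' β₂' β₃' β₄' : ℚ)
    (h1 : ∃ m : ℤ, 2 * β₁ = m) (h3 : ∃ m : ℤ, 2 * β₃ = m)
    (h1' : ∃ m : ℤ, 2 * β₁' = m) (h3' : ∃ m : ℤ, 2 * β₃' = m)
    (h12 : ∃ m : ℤ, β₁ + β₂ = m) (h34 : ∃ m : ℤ, β₃ + β₄ = m)
    (h12' : ∃ m : ℤ, β₁' + β₂' = m) (h34' : ∃ m : ℤ, β₃' + β₄' = m)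
    (α α' : ℚ) (hα : α = β₁ + β₂ + β₃ + β₄) (hα' : α' = β₁' + β₂' + β₃' + β₄')
    (H M : Fin 5 → ℚ)
    (hH : H = ![α, β₁, β₂, β₃, β₄]) (hM : M = ![α', β₁', β₂', β₃', β₄'])
    (hsol : q (M - H) = -4 ∧ q (M - (2 : ℚ) • H) = -4) :
    ∃ m : ℤ, q H = 8 * m := by
  have hH_adm : Admissible H := hH ▸ hα ▸ admissible_vecCons h1 h3 h12 h34
  have hM_adm : Admissible M := hM ▸ hα' ▸ admissible_vecCons h1' h3' h12' h34'
  have hq : q H = 2 * polar (M - H) H := by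
    refine q_eq_two_mul_polar_of_q_sub_eq ?_
    rw [← sub_add_eq_sub_sub, ← two_smul ℚ H, hsol.1, hsol.2]
  obtain ⟨m, hm⟩ := (hM_adm.sub hH_adm).exists_polar_eq_four_mul hH_adm
  exact ⟨m, by rw [hq, hm]; ring⟩

/-- Let `β₁, β₂, β₃, β₄, β₁′, β₂′, β₃′, β₄′ ∈ ℚ` satisfy the half-integrality
constraints `2βᵢ ∈ ℤ`, `2βᵢ′ ∈ ℤ`, `β₁+β₂ ∈ ℤ`, `β₃+β₄ ∈ ℤ`, `β₁′+β₂′ ∈ ℤ`,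
`β₃′+β₄′ ∈ ℤ`.  Set `α = β₁+β₂+β₃+β₄`, `α′ = β₁′+β₂′+β₃′+β₄′`,
`H = (α,β₁,β₂,β₃,β₄)`, `M = (α′,β₁′,β₂′,β₃′,β₄′)`.  If `q(M−H) = q(M−2H) = −4`,
then `q(H)` is divisible by `8`, i.e. `q(H)/4` is an even integer.  (In particular,
when `q(H)/4` is not an even integer the associated system of Diophantine equations
has no solution satisfying these half-integrality constraints.) -/
theorem parity_obstruction
    (β₁ β₂ β₃ β₄ β₁' β₂' β₃' β₄' : ℚ)
    (h1 : ∃ m : ℤ, 2 * β₁ = m) (h2 : ∃ m : ℤ, 2 * β₂ = m)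
    (h3 : ∃ m : ℤ, 2 * β₃ = m) (h4 : ∃ m : ℤ, 2 * β₄ = m)
    (h1' : ∃ m : ℤ, 2 * β₁' = m) (h2' : ∃ m : ℤ, 2 * β₂' = m)
    (h3' : ∃ m : ℤ, 2 * β₃' = m) (h4' : ∃ m : ℤ, 2 * β₄' = m)
    (h12 : ∃ m : ℤ, β₁ + β₂ = m) (h34 : ∃ m : ℤ, β₃ + β₄ = m)
    (h12' : ∃ m : ℤ, β₁' + β₂' = m) (h34' : ∃ m : ℤ, β₃' + β₄' = m)
    (α α' : ℚ) (hα : α = β₁ + β₂ + β₃ + β₄) (hα' : α' = β₁' + β₂' + β₃' + β₄')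
    (H M : Fin 5 → ℚ)
    (hH : H = ![α, β₁, β₂, β₃, β₄]) (hM : M = ![α', β₁', β₂', β₃', β₄'])
    (hsol : q (M - H) = -4 ∧ q (M - (2 : ℚ) • H) = -4) :
    ∃ m : ℤ, q H = 8 * m :=
  parity_obstruction_general β₁ β₂ β₃ β₄ β₁' β₂' β₃' β₄' h1 h3 h1' h3' h12 h34 h12' h34' α α' hα hα'
    H M hH hM hsol

end KummerSublattice
end
end
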